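/- arXiv:1904.07559 — 5 statements merged into one kernel-verified Lean document; each statement's English description precedes it below -/
import Mathlib

section
/- Preferential interpretations are closed under disjoint union: given a countable family {P_s}_{s∈S} of preferential interpretations each of which is a preferential model of a defeasible knowledge base K, the disjoint union U — whose domain is {(x,s) : x ∈ Δ^{P_s}, s ∈ S}, which interprets each concept name A as {(x,s) : x ∈ A^{P_s}}, each role name r as {((x,s),(y,s)) : (x,y) ∈ r^{P_s}}, and whose order is {((x,s),(y,s)) : x ≺^{P_s} y} — is a preferential interpretation and a preferential model of K. -/
/-!
Every concept of the disjoint union is the disjoint union of its extensions in the summands: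
role successors of `⟨s, x⟩` stay in the summand `s`, so the induction on concepts never leaves
it. Since the order also relates only points of the same summand, the minimal elements of such
a set are the disjoint union of the minimal elements in each summand. Smoothness and the
satisfaction of each GCI and DCI are therefore checked summand by summand.
-/

namespace DefeasibleDL

/-- ALC concepts over concept names `C` and role names `R`. -/
inductive Concept (C R : Type) : Type where
  | top : Concept C R
  | bot : Concept C R
  | atom : C → Concept C R
  | neg : Concept C R → Concept C R
  | conj : Concept C R → Concept C R → Concept C R
  | disj : Concept C R → Concept C R → Concept C R
  | ex : R → Concept C R → Concept C R
  | all : R → Concept C R → Concept C R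

/-- A classical interpretation with domain `D`. -/
structure ClassInterp (C R D : Type) where
  interpC : C → Set D
  interpR : R → D → D → Prop

/-- Extension of a concept in a classical interpretation. -/
def ClassInterp.eval {C R D : Type} (I : ClassInterp C R D) : Concept C R → Set D
  | .top => Set.univ
  | .bot => ∅
  | .atom a => I.interpC a
  | .neg c => (I.eval c)ᶜ
  | .conj c d => I.eval c ∩ I.eval d
  | .disj c d => I.eval c ∪ I.eval d
  | .ex r c => {x | ∃ y, I.interpR r x y ∧ y ∈ I.eval c}
  | .all r c => {x | ∀ y, I.interpR r x y → y ∈ I.eval c}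

/-- The `pref`-minimal elements of a set `S`. -/
def minSet {D : Type} (pref : D → D → Prop) (S : Set D) : Set D :=
  {x | x ∈ S ∧ ∀ y ∈ S, ¬ pref y x}

/-- A preferential interpretation: a classical interpretation together with a smooth
strict partial order on the domain. -/
structure PrefInterp (C R D : Type) extends ClassInterp C R D where
  pref : D → D → Prop
  pref_irrefl : ∀ x, ¬ pref x x
  pref_trans : ∀ x y z, pref x y → pref y z → pref x z
  smooth : ∀ c : Concept C R, (toClassInterp.eval c).Nonempty →
      (minSet pref (toClassInterp.eval c)).Nonempty

/-- Satisfaction of a general concept inclusion `c ⊑ d`. -/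
def PrefInterp.satGCI {C R D : Type} (P : PrefInterp C R D) (c d : Concept C R) : Prop :=
  P.toClassInterp.eval c ⊆ P.toClassInterp.eval d

/-- Satisfaction of a defeasible concept inclusion `c ⊏∼ d`. -/
def PrefInterp.satDCI {C R D : Type} (P : PrefInterp C R D) (c d : Concept C R) : Prop :=
  minSet P.pref (P.toClassInterp.eval c) ⊆ P.toClassInterp.eval d

/-- A strict partial order is modular if its incomparability relation is transitive. -/
def Modular {D : Type} (pref : D → D → Prop) : Prop :=
  ∀ x y z : D, (¬ pref x y ∧ ¬ pref y x) → (¬ pref y z ∧ ¬ pref z y) →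
    (¬ pref x z ∧ ¬ pref z x)

/-- Convexity of a height function: every value below an attained value is attained. -/
def Convex {D : Type} (h : D → ℕ) : Prop :=
  ∀ (x : D) (j : ℕ), j < h x → ∃ y : D, h y = j

/-- `pref` is ranked by the convex height function `h`. -/
def RankedBy {D : Type} (pref : D → D → Prop) (h : D → ℕ) : Prop :=
  Convex h ∧ ∀ x y : D, pref x y ↔ h x < h y

/-- `pref` is a ranked order. -/
def IsRanked {D : Type} (pref : D → D → Prop) : Prop :=
  ∃ h : D → ℕ, RankedBy pref h

/-- Statements: general or defeasible concept inclusions. -/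
inductive Stmt (C R : Type) : Type where
  | gci : Concept C R → Concept C R → Stmt C R
  | dci : Concept C R → Concept C R → Stmt C R

def PrefInterp.satStmt {C R D : Type} (P : PrefInterp C R D) : Stmt C R → Prop
  | .gci c d => P.satGCI c d
  | .dci c d => P.satDCI c d

/-- A defeasible knowledge base: a finite TBox and a finite DTBox
(both represented as sets of pairs of concepts). -/
structure KB (C R : Type) where
  tbox : Set (Concept C R × Concept C R)
  dbox : Set (Concept C R × Concept C R)
  tbox_finite : tbox.Finite
  dbox_finite : dbox.Finite

/-- The statements of a knowledge base. -/
def KB.stmts {C R : Type} (K : KB C R) : Set (Stmt C R) :=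
  {s | (∃ p ∈ K.tbox, s = Stmt.gci p.1 p.2) ∨ (∃ p ∈ K.dbox, s = Stmt.dci p.1 p.2)}

/-- A preferential model of a knowledge base. -/
def PrefInterp.isModel {C R D : Type} (P : PrefInterp C R D) (K : KB C R) : Prop :=
  (∀ p ∈ K.tbox, P.satGCI p.1 p.2) ∧ (∀ p ∈ K.dbox, P.satDCI p.1 p.2)

/-- Preferential entailment. -/
def prefEntails {C R : Type} (K : KB C R) (s : Stmt C R) : Prop :=
  ∀ (D : Type) (_ : Nonempty D) (P : PrefInterp C R D), P.isModel K → P.satStmt s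

/-- Modular entailment. -/
def modEntails {C R : Type} (K : KB C R) (s : Stmt C R) : Prop :=
  ∀ (D : Type) (_ : Nonempty D) (P : PrefInterp C R D),
    Modular P.pref → P.isModel K → P.satStmt s

section Sigma

variable {S : Type} {D : S → Type} (r : ∀ s, D s → D s → Prop)

def sigmaRel (p q : Σ s, D s) : Prop :=
  ∃ (s : S) (x y : D s), p = ⟨s, x⟩ ∧ q = ⟨s, y⟩ ∧ r s x y

variable {r}

lemma sigmaRel_mk_left_iff {s : S} {x : D s} {q : Σ s, D s} :
    sigmaRel r ⟨s, x⟩ q ↔ ∃ y, q = ⟨s, y⟩ ∧ r s x y := by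
  constructor
  · rintro ⟨t, x', y, hx, rfl, hr⟩
    obtain ⟨rfl, hx⟩ := Sigma.mk.inj hx
    cases hx
    exact ⟨y, rfl, hr⟩
  · rintro ⟨y, rfl, hr⟩
    exact ⟨s, x, y, rfl, rfl, hr⟩

lemma sigmaRel_mk_right_iff {s : S} {y : D s} {p : Σ s, D s} :
    sigmaRel r p ⟨s, y⟩ ↔ ∃ x, p = ⟨s, x⟩ ∧ r s x y := by
  constructor
  · rintro ⟨t, x, y', rfl, hy, hr⟩
    obtain ⟨rfl, hy⟩ := Sigma.mk.inj hy
    cases hy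
    exact ⟨x, rfl, hr⟩
  · rintro ⟨x, rfl, hr⟩
    exact ⟨s, x, y, rfl, rfl, hr⟩

lemma sigmaRel_mk_mk_iff {s : S} {x y : D s} : sigmaRel r ⟨s, x⟩ ⟨s, y⟩ ↔ r s x y := by
  simp [sigmaRel_mk_left_iff]

lemma minSet_sigmaRel (T : ∀ s, Set (D s)) :
    minSet (sigmaRel r) (Set.univ.sigma T) = Set.univ.sigma fun s => minSet (r s) (T s) := by
  ext ⟨s, x⟩
  simp only [minSet, Set.mem_ofPred_eq, Set.mk_sigma_iff, Set.mem_univ, true_and,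
    and_congr_right_iff]
  refine fun _ => ⟨fun h y hy => h ⟨s, y⟩ ⟨trivial, hy⟩ ∘ sigmaRel_mk_mk_iff.mpr, ?_⟩
  rintro h q hq hqx
  obtain ⟨y, rfl, hyx⟩ := sigmaRel_mk_right_iff.mp hqx
  exact h y hq.2 hyx

lemma univ_sigma_subset_univ_sigma_iff {t₁ t₂ : ∀ s, Set (D s)} :
    Set.univ.sigma t₁ ⊆ Set.univ.sigma t₂ ↔ ∀ s, t₁ s ⊆ t₂ s := by
  simp [Set.subset_def, Sigma.forall]

end Sigma

section DisjointUnion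

variable {C R S : Type} {D : S → Type}

def ClassInterp.sigma (I : ∀ s, ClassInterp C R (D s)) : ClassInterp C R (Σ s, D s) where
  interpC a := {p | p.2 ∈ (I p.1).interpC a}
  interpR r := sigmaRel fun s => (I s).interpR r

lemma ClassInterp.eval_sigma (I : ∀ s, ClassInterp C R (D s)) (c : Concept C R) :
    (ClassInterp.sigma I).eval c = Set.univ.sigma fun s => (I s).eval c := by
  induction c with
  | top | bot | atom => ext; simp [eval, sigma]
  | neg c ih => ext; simp [eval, ih]
  | conj c d ihc ihd | disj c d ihc ihd => ext; simp [eval, ihc, ihd]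
  | ex r c ih =>
    ext ⟨s, x⟩
    simp only [eval, ih, Set.mem_ofPred_eq, Set.mk_sigma_iff, Set.mem_univ, true_and]
    constructor
    · rintro ⟨q, hxq, hq⟩
      obtain ⟨y, rfl, hxy⟩ := sigmaRel_mk_left_iff.mp hxq
      exact ⟨y, hxy, hq.2⟩
    · rintro ⟨y, hxy, hy⟩
      exact ⟨⟨s, y⟩, sigmaRel_mk_mk_iff.mpr hxy, trivial, hy⟩
  | all r c ih =>
    ext ⟨s, x⟩
    simp only [eval, ih, Set.mem_ofPred_eq, Set.mk_sigma_iff, Set.mem_univ, true_and]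
    constructor
    · exact fun h y hxy => (h ⟨s, y⟩ (sigmaRel_mk_mk_iff.mpr hxy)).2
    · intro h q hxq
      obtain ⟨y, rfl, hxy⟩ := sigmaRel_mk_left_iff.mp hxq
      exact ⟨trivial, h y hxy⟩

def PrefInterp.sigma (P : ∀ s, PrefInterp C R (D s)) : PrefInterp C R (Σ s, D s) where
  toClassInterp := ClassInterp.sigma fun s => (P s).toClassInterp
  pref := sigmaRel fun s => (P s).pref
  pref_irrefl := by
    rintro ⟨s, x⟩
    simpa [sigmaRel_mk_mk_iff] using (P s).pref_irrefl x
  pref_trans := by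
    rintro ⟨s, x⟩ q r hxq hqr
    obtain ⟨y, rfl, hxy⟩ := sigmaRel_mk_left_iff.mp hxq
    obtain ⟨z, rfl, hyz⟩ := sigmaRel_mk_left_iff.mp hqr
    exact sigmaRel_mk_mk_iff.mpr ((P s).pref_trans x y z hxy hyz)
  smooth c hc := by
    rw [ClassInterp.eval_sigma, Set.sigma_nonempty_iff] at hc
    obtain ⟨s, -, hs⟩ := hc
    rw [ClassInterp.eval_sigma, minSet_sigmaRel, Set.sigma_nonempty_iff]
    exact ⟨s, Set.mem_univ s, (P s).smooth c hs⟩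

variable {P : ∀ s, PrefInterp C R (D s)}

lemma PrefInterp.satGCI_sigma_iff {c d : Concept C R} :
    (PrefInterp.sigma P).satGCI c d ↔ ∀ s, (P s).satGCI c d := by
  simp only [satGCI, PrefInterp.sigma, ClassInterp.eval_sigma, univ_sigma_subset_univ_sigma_iff]

lemma PrefInterp.satDCI_sigma_iff {c d : Concept C R} :
    (PrefInterp.sigma P).satDCI c d ↔ ∀ s, (P s).satDCI c d := by
  simp only [satDCI, PrefInterp.sigma, ClassInterp.eval_sigma, minSet_sigmaRel,
    univ_sigma_subset_univ_sigma_iff]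

lemma PrefInterp.isModel_sigma_iff {K : KB C R} :
    (PrefInterp.sigma P).isModel K ↔ ∀ s, (P s).isModel K := by
  simp only [isModel, satGCI_sigma_iff, satDCI_sigma_iff, forall_and]
  grind

end DisjointUnion

theorem disjointUnion_prefInterp_model_general {C R S : Type} {Dm : S → Type}
    (P : ∀ s, PrefInterp C R (Dm s)) (K : KB C R)
    (hmod : ∀ s, (P s).isModel K) :
    ∃ U : PrefInterp C R (Σ s, Dm s),
      (∀ a : C, U.interpC a = {p : Σ s, Dm s | p.2 ∈ (P p.1).interpC a}) ∧
      (∀ (r : R) (p q : Σ s, Dm s), U.interpR r p q ↔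
        ∃ (s : S) (x y : Dm s), p = ⟨s, x⟩ ∧ q = ⟨s, y⟩ ∧ (P s).interpR r x y) ∧
      (∀ p q : Σ s, Dm s, U.pref p q ↔
        ∃ (s : S) (x y : Dm s), p = ⟨s, x⟩ ∧ q = ⟨s, y⟩ ∧ (P s).pref x y) ∧
      U.isModel K :=
  ⟨PrefInterp.sigma P, fun _ => rfl, fun _ _ _ => Iff.rfl, fun _ _ => Iff.rfl,
    PrefInterp.isModel_sigma_iff.mpr hmod⟩

/-- preferential interpretations are closed under disjoint union.
Given a countable family of preferential models of a defeasible knowledge base `K`,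
the disjoint union (with the indicated interpretation of concept names, role names
and the preference order) is a preferential interpretation and a preferential model
of `K`. -/
theorem disjointUnion_prefInterp_model {C R S : Type} [Finite C] [Finite R]
    [Countable S] [Nonempty S] {Dm : S → Type} (_ : ∀ s, Nonempty (Dm s))
    (P : ∀ s, PrefInterp C R (Dm s)) (K : KB C R)
    (hmod : ∀ s, (P s).isModel K) :
    ∃ U : PrefInterp C R (Σ s, Dm s),
      (∀ a : C, U.interpC a = {p : Σ s, Dm s | p.2 ∈ (P p.1).interpC a}) ∧
      (∀ (r : R) (p q : Σ s, Dm s), U.interpR r p q ↔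
        ∃ (s : S) (x y : Dm s), p = ⟨s, x⟩ ∧ q = ⟨s, y⟩ ∧ (P s).interpR r x y) ∧
      (∀ p q : Σ s, Dm s, U.pref p q ↔
        ∃ (s : S) (x y : Dm s), p = ⟨s, x⟩ ∧ q = ⟨s, y⟩ ∧ (P s).pref x y) ∧
      U.isModel K :=
  disjointUnion_prefInterp_model_general P K hmod

end DefeasibleDL
end

section
/- Uniqueness of the ranking function: for every ranked interpretation R = (Δ^R, ·^R, ≺^R) there is exactly one function h : Δ^R → ℕ satisfying the convexity property and such that for all x, y ∈ Δ^R, x ≺^R y if and only if h(x) < h(y). -/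
namespace DefeasibleDL

/-! A convex `g` whose strict comparisons are reflected by `f` satisfies `g ≤ f`, by strong
induction on `f x`: if `f x < g x`, convexity yields `y` with `g y = f x`, so `f y < f x`
and induction gives `g y ≤ f y < f x`. Two ranking functions of one order bound each other
in this way. -/

theorem Convex.le_of_lt_imp_lt {D : Type} {g f : D → ℕ} (hg : Convex g)
    (hgf : ∀ x y, g x < g y → f x < f y) (x : D) : g x ≤ f x := by
  induction hn : f x using Nat.strong_induction_on generalizing x with
  | _ n ih =>
    by_contra! hlt
    obtain ⟨y, hy⟩ := hg x n hlt
    have hfy : f y < n := hn ▸ hgf y x (hy ▸ hlt)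
    have hgy : g y ≤ f y := ih (f y) hfy y rfl
    omega

theorem RankedBy.unique {D : Type} {pref : D → D → Prop} {h₁ h₂ : D → ℕ}
    (H₁ : RankedBy pref h₁) (H₂ : RankedBy pref h₂) : h₁ = h₂ :=
  funext fun x =>
    le_antisymm (H₁.1.le_of_lt_imp_lt (fun x y hxy => (H₂.2 x y).1 ((H₁.2 x y).2 hxy)) x)
      (H₂.1.le_of_lt_imp_lt (fun x y hxy => (H₁.2 x y).1 ((H₂.2 x y).2 hxy)) x)

theorem rank_function_unique_general {C R D : Type} (M : PrefInterp C R D)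
    (hranked : IsRanked M.pref) :
    ∃! h : D → ℕ, RankedBy M.pref h := by
  obtain ⟨h, hh⟩ := hranked
  exact ⟨h, hh, fun g hg => hg.unique hh⟩

/-- for every ranked interpretation there is exactly one convex
height function characterising its preference order. -/
theorem rank_function_unique {C R D : Type} [Finite C] [Finite R]
    (_ : Nonempty D) (M : PrefInterp C R D) (hmod : Modular M.pref)
    (hranked : IsRanked M.pref) :
    ∃! h : D → ℕ, RankedBy M.pref h :=
  rank_function_unique_general M hranked

end DefeasibleDL
end

section
/- Finite-model property for defeasible ALC: every defeasible knowledge base K = T ∪ D that has a modular model also has a ranked model with finite domain. -/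
/-!
Filtration. Identify two elements of a modular model when they satisfy the same subconcepts
of `K`; the finitely many resulting types, with the induced atoms and roles, evaluate every
subconcept as the original model does, so the GCIs survive. Each type is the extension of a
concept, so by smoothness it has a `≺`-minimal representative; ordering types by their
representatives gives a modular, hence ranked, order on a finite set. Modularity also shows that
a type minimal in `C` has a representative minimal in `C`, so the DCIs survive as well.
-/

namespace DefeasibleDL

section Order

variable {D : Type} {pref : D → D → Prop}

theorem Modular.pref_or_pref (hmod : Modular pref)
    (htrans : ∀ x y z, pref x y → pref y z → pref x z) {a b : D} (hab : pref a b) (z : D) :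
    pref a z ∨ pref z b := by
  by_contra! ⟨haz, hzb⟩
  have hza : ¬ pref z a := fun hza => hzb (htrans z a b hza hab)
  have hbz : ¬ pref b z := fun hbz => haz (htrans a b z hab hbz)
  exact (hmod a z b ⟨haz, hza⟩ ⟨hzb, hbz⟩).1 hab

theorem Modular.comap {E : Type} (hmod : Modular pref) (f : E → D) :
    Modular fun a b => pref (f a) (f b) :=
  fun a b c => hmod (f a) (f b) (f c)

theorem exists_convex_lt_iff_lt [Finite D] (f : D → ℕ) :
    ∃ g : D → ℕ, Convex g ∧ ∀ x y, f x < f y ↔ g x < g y := by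
  classical
  have := Fintype.ofFinite D
  set V := Finset.univ.image f
  have hV : ∀ x, f x ∈ V := fun x => Finset.mem_image_of_mem f (Finset.mem_univ x)
  let e : Fin V.card ≃o V := V.orderIsoOfFin rfl
  refine ⟨fun x => e.symm ⟨f x, hV x⟩, fun x j hj => ?_, fun x y => ?_⟩
  · have hjV : j < V.card := hj.trans (e.symm _).isLt
    obtain ⟨y, -, hy⟩ := Finset.mem_image.mp (e ⟨j, hjV⟩).2
    have hyj : (⟨f y, hV y⟩ : V) = e ⟨j, hjV⟩ := Subtype.ext hy
    exact ⟨y, by simp only [hyj, OrderIso.symm_apply_apply]⟩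
  · rw [← Fin.lt_def, OrderIso.lt_iff_lt, Subtype.mk_lt_mk]

/-- Counting predecessors gives a height that reflects the order, thanks to modularity. -/
theorem Modular.isRanked [Finite D] (hmod : Modular pref) (hirr : ∀ x, ¬ pref x x)
    (htrans : ∀ x y z, pref x y → pref y z → pref x z) : IsRanked pref := by
  classical
  have := Fintype.ofFinite D
  let below : D → Finset D := fun x => Finset.univ.filter (pref · x)
  have hmono : ∀ {x y}, pref x y → (below x).card < (below y).card := fun {x y} hxy =>
    Finset.card_lt_card ⟨fun z hz => by simp_all [below, htrans z x y],
      fun hsub => hirr x (by simpa [below] using hsub (by simp [below, hxy]))⟩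
  have hanti : ∀ {x y}, ¬ pref x y → (below y).card ≤ (below x).card := fun {x y} hxy =>
    Finset.card_le_card fun z hz => by
      simp only [Finset.mem_filter, Finset.mem_univ, true_and, below] at hz ⊢
      exact (hmod.pref_or_pref htrans hz x).resolve_right hxy
  obtain ⟨g, hg, hfg⟩ := exists_convex_lt_iff_lt fun x => (below x).card
  refine ⟨g, hg, fun x y => ?_⟩
  rw [← hfg]
  exact ⟨hmono, fun hlt => by_contra fun hxy => (hanti hxy).not_gt hlt⟩

theorem IsRanked.minSet_nonempty (hrank : IsRanked pref) {S : Set D} (hS : S.Nonempty) :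
    (minSet pref S).Nonempty := by
  obtain ⟨h, -, hh⟩ := hrank
  obtain ⟨x, hx, hmin⟩ := (InvImage.wf h wellFounded_lt).has_min S hS
  exact ⟨x, hx, fun y hy hyx => hmin y hy ((hh y x).mp hyx)⟩

end Order

def PrefInterp.ofRanked {C R D : Type} (I : ClassInterp C R D) (pref : D → D → Prop)
    (hrank : IsRanked pref) : PrefInterp C R D where
  toClassInterp := I
  pref := pref
  pref_irrefl x hx := by
    obtain ⟨h, -, hh⟩ := hrank
    exact lt_irrefl _ ((hh x x).mp hx)
  pref_trans x y z hxy hyz := by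
    obtain ⟨h, -, hh⟩ := hrank
    exact (hh x z).mpr (((hh x y).mp hxy).trans ((hh y z).mp hyz))
  smooth _ := hrank.minSet_nonempty

section Concepts

variable {C R : Type}

def Concept.subconcepts : Concept C R → Set (Concept C R)
  | .top => {.top}
  | .bot => {.bot}
  | .atom a => {.atom a}
  | .neg c => insert (.neg c) c.subconcepts
  | .conj c d => insert (.conj c d) (c.subconcepts ∪ d.subconcepts)
  | .disj c d => insert (.disj c d) (c.subconcepts ∪ d.subconcepts)
  | .ex r c => insert (.ex r c) c.subconcepts
  | .all r c => insert (.all r c) c.subconcepts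

theorem Concept.mem_subconcepts_self (c : Concept C R) : c ∈ c.subconcepts := by
  cases c <;> simp [subconcepts]

theorem Concept.finite_subconcepts (c : Concept C R) : c.subconcepts.Finite := by
  induction c <;> simp_all [subconcepts]

theorem Concept.subconcepts_subset {a b : Concept C R} (h : a ∈ b.subconcepts) :
    a.subconcepts ⊆ b.subconcepts := by
  induction b with
  | top | bot | atom => simp_all [subconcepts]
  | neg c ih | ex r c ih | all r c ih =>
    rcases h with rfl | h
    · rfl
    · exact (ih h).trans (Set.subset_insert _ _)
  | conj c d ihc ihd | disj c d ihc ihd =>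
    rcases h with rfl | h | h
    · rfl
    · exact (ihc h).trans (Set.subset_union_left.trans (Set.subset_insert _ _))
    · exact (ihd h).trans (Set.subset_union_right.trans (Set.subset_insert _ _))

def IsSubconceptClosed (S : Set (Concept C R)) : Prop :=
  ∀ ⦃c⦄, c ∈ S → c.subconcepts ⊆ S

def KB.closure (K : KB C R) : Set (Concept C R) :=
  ⋃ p ∈ K.tbox ∪ K.dbox, p.1.subconcepts ∪ p.2.subconcepts

theorem KB.finite_closure (K : KB C R) : K.closure.Finite :=
  (K.tbox_finite.union K.dbox_finite).biUnion fun p _ =>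
    p.1.finite_subconcepts.union p.2.finite_subconcepts

theorem KB.isSubconceptClosed_closure (K : KB C R) : IsSubconceptClosed K.closure := by
  intro c hc b hb
  obtain ⟨p, hp, hc⟩ := Set.mem_iUnion₂.mp hc
  rcases hc with hc | hc
  · exact Set.mem_biUnion hp (Or.inl (Concept.subconcepts_subset hc hb))
  · exact Set.mem_biUnion hp (Or.inr (Concept.subconcepts_subset hc hb))

instance KB.finite_closure_coe (K : KB C R) : Finite K.closure :=
  K.finite_closure.to_subtype

theorem KB.fst_mem_closure (K : KB C R) {p : Concept C R × Concept C R}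
    (hp : p ∈ K.tbox ∪ K.dbox) : p.1 ∈ K.closure :=
  Set.mem_biUnion hp (Or.inl p.1.mem_subconcepts_self)

theorem KB.snd_mem_closure (K : KB C R) {p : Concept C R × Concept C R}
    (hp : p ∈ K.tbox ∪ K.dbox) : p.2 ∈ K.closure :=
  Set.mem_biUnion hp (Or.inr p.2.mem_subconcepts_self)

end Concepts

namespace ClassInterp

variable {C R D : Type} (I : ClassInterp C R D) (S : Set (Concept C R))

def type (x : D) : S → Prop := fun c => x ∈ I.eval c

abbrev Types : Set (S → Prop) := Set.range (I.type S)

def toType : D → I.Types S := Set.rangeFactorization (I.type S)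

theorem toType_surjective : Function.Surjective (I.toType S) :=
  Set.rangeFactorization_surjective

variable {I S}

theorem mem_eval_iff_of_toType_eq {x y : D} (h : I.toType S x = I.toType S y) {c : Concept C R}
    (hc : c ∈ S) : x ∈ I.eval c ↔ y ∈ I.eval c :=
  iff_of_eq (congrFun (congrArg Subtype.val h) ⟨c, hc⟩)

variable (I S)

/-- The smallest filtration of `I` through `S`. -/
def filtration : ClassInterp C R (I.Types S) where
  interpC a := {t | ∃ h : .atom a ∈ S, t.1 ⟨.atom a, h⟩}
  interpR r t t' := ∃ x y, I.toType S x = t ∧ I.toType S y = t' ∧ I.interpR r x y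

variable {I S}

theorem toType_mem_eval_filtration (hS : IsSubconceptClosed S) {c : Concept C R} (hc : c ∈ S)
    (x : D) : I.toType S x ∈ (I.filtration S).eval c ↔ x ∈ I.eval c := by
  induction c generalizing x with
  | top | bot => simp [eval]
  | atom a => exact ⟨fun ⟨_, h⟩ => h, fun h => ⟨hc, h⟩⟩
  | neg c ih =>
    have := ih (hS hc (by simp [Concept.subconcepts, Concept.mem_subconcepts_self])) x
    simp only [eval, Set.mem_compl_iff, this]
  | conj c d ihc ihd | disj c d ihc ihd =>
    have hc' := ihc (hS hc (by simp [Concept.subconcepts, Concept.mem_subconcepts_self])) x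
    have hd' := ihd (hS hc (by simp [Concept.subconcepts, Concept.mem_subconcepts_self])) x
    simp only [eval, Set.mem_inter_iff, Set.mem_union, hc', hd']
  | ex r c ih =>
    have ih := ih (hS hc (by simp [Concept.subconcepts, Concept.mem_subconcepts_self]))
    constructor
    · rintro ⟨-, ⟨x', y, hx', rfl, hr⟩, hy⟩
      exact (mem_eval_iff_of_toType_eq hx' hc).mp ⟨y, hr, (ih y).mp hy⟩
    · rintro ⟨y, hr, hy⟩
      exact ⟨I.toType S y, ⟨x, y, rfl, rfl, hr⟩, (ih y).mpr hy⟩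
  | all r c ih =>
    have ih := ih (hS hc (by simp [Concept.subconcepts, Concept.mem_subconcepts_self]))
    constructor
    · exact fun h y hr => (ih y).mp (h _ ⟨x, y, rfl, rfl, hr⟩)
    · rintro h - ⟨x', y, hx', rfl, hr⟩
      exact (ih y).mpr ((mem_eval_iff_of_toType_eq hx' hc).mpr h y hr)

variable (I S)

theorem exists_eval_iff_forall_mem (l : List (Concept C R)) (P : Concept C R → Prop) :
    ∃ γ : Concept C R, ∀ x, x ∈ I.eval γ ↔ ∀ c ∈ l, (x ∈ I.eval c ↔ P c) := by
  induction l with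
  | nil => exact ⟨.top, by simp [eval]⟩
  | cons c l ih =>
    obtain ⟨γ, hγ⟩ := ih
    by_cases hP : P c
    · exact ⟨.conj c γ, by simp [eval, hγ, hP]⟩
    · exact ⟨.conj (.neg c) γ, by simp [eval, hγ, hP]⟩

theorem exists_eval_eq_preimage_toType [Finite S] (t : I.Types S) :
    ∃ γ : Concept C R, I.eval γ = I.toType S ⁻¹' {t} := by
  obtain ⟨x, rfl⟩ := I.toType_surjective S t
  obtain ⟨γ, hγ⟩ := I.exists_eval_iff_forall_mem S.toFinite.toFinset.toList (x ∈ I.eval ·)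
  refine ⟨γ, Set.ext fun y => ?_⟩
  simp only [hγ, Finset.mem_toList, Set.Finite.mem_toFinset, Set.mem_preimage,
    Set.mem_singleton_iff, toType, Set.rangeFactorization, Subtype.mk.injEq, funext_iff, type]
  exact ⟨fun h c => propext (h c c.2), fun h c hc => iff_of_eq (h ⟨c, hc⟩)⟩

end ClassInterp

namespace PrefInterp

variable {C R D : Type} (M : PrefInterp C R D) (S : Set (Concept C R)) [Finite S]

/-- Smoothness applies because each fiber of `toType` is the extension of a concept. -/
theorem minSet_preimage_toType_nonempty (t : M.Types S) :
    (minSet M.pref (M.toType S ⁻¹' {t})).Nonempty := by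
  obtain ⟨γ, hγ⟩ := M.exists_eval_eq_preimage_toType S t
  obtain ⟨x, rfl⟩ := M.toType_surjective S t
  rw [← hγ]
  exact M.smooth γ ⟨x, hγ ▸ rfl⟩

noncomputable def minRep (t : M.Types S) : D :=
  (M.minSet_preimage_toType_nonempty S t).some

theorem minRep_mem (t : M.Types S) : M.minRep S t ∈ minSet M.pref (M.toType S ⁻¹' {t}) :=
  (M.minSet_preimage_toType_nonempty S t).some_mem

theorem toType_minRep (t : M.Types S) : M.toType S (M.minRep S t) = t :=
  (M.minRep_mem S t).1

theorem isRanked_comap_minRep (hmod : Modular M.pref) :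
    IsRanked fun t t' => M.pref (M.minRep S t) (M.minRep S t') :=
  (hmod.comap _).isRanked (fun _ => M.pref_irrefl _) fun _ _ _ => M.pref_trans _ _ _

noncomputable def filtration (hmod : Modular M.pref) : PrefInterp C R (M.Types S) :=
  ofRanked (M.toClassInterp.filtration S) _ (M.isRanked_comap_minRep S hmod)

variable {M S}

theorem satGCI_filtration (hmod : Modular M.pref) (hS : IsSubconceptClosed S)
    {c d : Concept C R} (hc : c ∈ S) (hd : d ∈ S) (h : M.satGCI c d) :
    (M.filtration S hmod).satGCI c d := by
  intro t ht
  obtain ⟨x, rfl⟩ := M.toType_surjective S t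
  exact (ClassInterp.toType_mem_eval_filtration hS hd x).mpr
    (h ((ClassInterp.toType_mem_eval_filtration hS hc x).mp ht))

/-- If `y ∈ c` lies below the representative of a type minimal in `c`, modularity puts the
representative of the type of `y` below it too, or `y` below its own representative. -/
theorem satDCI_filtration (hmod : Modular M.pref) (hS : IsSubconceptClosed S)
    {c d : Concept C R} (hc : c ∈ S) (hd : d ∈ S) (h : M.satDCI c d) :
    (M.filtration S hmod).satDCI c d := by
  rintro t ⟨htc, htmin⟩
  rw [← M.toType_minRep S t] at htc ⊢
  apply (ClassInterp.toType_mem_eval_filtration hS hd _).mpr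
  refine h ⟨(ClassInterp.toType_mem_eval_filtration hS hc _).mp htc, fun y hy hyx => ?_⟩
  rcases hmod.pref_or_pref M.pref_trans hyx (M.minRep S (M.toType S y)) with hy' | hrep
  · exact (M.minRep_mem S _).2 y rfl hy'
  · refine htmin _ ((ClassInterp.toType_mem_eval_filtration hS hc y).mpr hy) ?_
    simpa only [filtration, ofRanked, toType_minRep] using hrep

theorem isModel_filtration {K : KB C R} (hmod : Modular M.pref) (hK : M.isModel K) :
    (M.filtration K.closure hmod).isModel K := by
  have hS := K.isSubconceptClosed_closure
  refine ⟨fun p hp => ?_, fun p hp => ?_⟩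
  · exact satGCI_filtration hmod hS (K.fst_mem_closure (.inl hp)) (K.snd_mem_closure (.inl hp))
      (hK.1 p hp)
  · exact satDCI_filtration hmod hS (K.fst_mem_closure (.inr hp)) (K.snd_mem_closure (.inr hp))
      (hK.2 p hp)

end PrefInterp

theorem finite_model_property_general {C R : Type} (K : KB C R)
    (hmod : ∃ (D : Type) (_ : Nonempty D) (M : PrefInterp C R D),
      Modular M.pref ∧ M.isModel K) :
    ∃ (D : Type) (_ : Nonempty D) (_ : Finite D) (M : PrefInterp C R D),
      IsRanked M.pref ∧ M.isModel K := by
  obtain ⟨D, ⟨x⟩, M, hM, hK⟩ := hmod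
  exact ⟨_, ⟨M.toType K.closure x⟩, inferInstance, M.filtration K.closure hM,
    M.isRanked_comap_minRep K.closure hM, M.isModel_filtration hM hK⟩

/-- finite-model property: every defeasible knowledge base that has
a modular model also has a ranked model with finite domain. -/
theorem finite_model_property {C R : Type} [Finite C] [Finite R] (K : KB C R)
    (hmod : ∃ (D : Type) (_ : Nonempty D) (M : PrefInterp C R D),
      Modular M.pref ∧ M.isModel K) :
    ∃ (D : Type) (_ : Nonempty D) (_ : Finite D) (M : PrefInterp C R D),
      IsRanked M.pref ∧ M.isModel K :=
  finite_model_property_general K hmod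

end DefeasibleDL
end

section
/- For every defeasible knowledge base K and every ALC concept C: rank_K(C) = ∞ if and only if K modularly entails C ⊑ ⊥ (i.e. C^R = ∅ in every modular model R of K). -/
namespace DefeasibleDL

/-- Modular entailment from a TBox `T` and a DTBox `Ds` (given as sets of pairs). -/
def modEntailsFrom {C R : Type} (T Ds : Set (Concept C R × Concept C R))
    (s : Stmt C R) : Prop :=
  ∀ (D : Type) (_ : Nonempty D) (P : PrefInterp C R D), Modular P.pref →
    (∀ p ∈ T, P.satGCI p.1 p.2) → (∀ p ∈ Ds, P.satDCI p.1 p.2) → P.satStmt s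

/-- A concept `c` is exceptional w.r.t. `T ∪ Ds` if `T ∪ Ds ⊨_mod ⊤ ⊏∼ ¬c`. -/
def ExceptionalSem {C R : Type} (T Ds : Set (Concept C R × Concept C R))
    (c : Concept C R) : Prop :=
  modEntailsFrom T Ds (Stmt.dci Concept.top (Concept.neg c))

/-- The iterated exceptionality sequence: `E 0 = Ds` and `E (n+1)` is the set of
DCIs of `E n` whose left-hand side is exceptional w.r.t. `T ∪ E n`
(so that `E i` is the DTBox of the knowledge base `K^i` of the ranking
construction, and `D^r_i = E i \ E (i+1)`). -/
def EseqSem {C R : Type} (T Ds : Set (Concept C R × Concept C R)) :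
    ℕ → Set (Concept C R × Concept C R)
  | 0 => Ds
  | n + 1 => {p | p ∈ EseqSem T Ds n ∧ ExceptionalSem T (EseqSem T Ds n) p.1}

/-! Modular models of a finite DTBox may be taken ranked by a height into `ℕ`: count the DCIs
whose left-hand side has its minimal elements strictly below a point.

If `c` is exceptional at the stage `E N` where the construction stabilises, every left-hand side
in `E N` is exceptional as well. As long as these left-hand sides lie at height `≥ k`, lowering
all heights by `k` (truncated at `0`) leaves a height model, whose bottom layer exceptionality
keeps free of them and of `c`; so by induction on `k` they all lie above every `k`, and `c` is
empty.

Conversely, if `c` is not exceptional at stage `n`, take a height model of `T ∪ E n` realising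
`c` and, for each DCI removed at an earlier stage `m`, a height model of `T ∪ E m` realising its
left-hand side. Their disjoint union, layered by stage, is a modular model of `K` in which `c`
is nonempty: a point that is minimal in a left-hand side lies in a layer where that DCI holds. -/

variable {C R : Type}

section HeightModels

variable {D : Type}

def heightInterp (I : ClassInterp C R D) (g : D → ℕ) : PrefInterp C R D where
  toClassInterp := I
  pref y z := g y < g z
  pref_irrefl _ := lt_irrefl _
  pref_trans _ _ _ := lt_trans
  smooth c hne := (measure g).wf.has_min (I.eval c) hne

@[simp]
lemma heightInterp_toClassInterp (I : ClassInterp C R D) (g : D → ℕ) :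
    (heightInterp I g).toClassInterp = I :=
  rfl

@[simp]
lemma heightInterp_pref (I : ClassInterp C R D) (g : D → ℕ) (y z : D) :
    (heightInterp I g).pref y z ↔ g y < g z :=
  Iff.rfl

lemma heightInterp_modular (I : ClassInterp C R D) (g : D → ℕ) :
    Modular (heightInterp I g).pref := by
  simp only [Modular, heightInterp_pref]
  omega

def IsHeightModel (T Ds : Set (Concept C R × Concept C R)) (I : ClassInterp C R D)
    (g : D → ℕ) : Prop :=
  (∀ p ∈ T, I.eval p.1 ⊆ I.eval p.2) ∧ ∀ p ∈ Ds, (heightInterp I g).satDCI p.1 p.2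

lemma heightInterp_sub_satDCI {I : ClassInterp C R D} {g : D → ℕ} {l r : Concept C R}
    (k : ℕ) (h : (heightInterp I g).satDCI l r) (hk : ∀ y ∈ I.eval l, k ≤ g y) :
    (heightInterp I (g · - k)).satDCI l r := by
  rintro y ⟨hy, hymin⟩
  refine h ⟨hy, fun z hz hzy => hymin z hz ?_⟩
  have := hk z hz
  simp only [heightInterp_pref] at hzy ⊢
  omega

lemma IsHeightModel.lt_of_exceptionalSem {T Ds : Set (Concept C R × Concept C R)}
    {I : ClassInterp C R D} {g : D → ℕ} (hM : IsHeightModel T Ds I g) {k : ℕ}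
    (hk : ∀ p ∈ Ds, ∀ y ∈ I.eval p.1, k ≤ g y) {d : Concept C R}
    (hd : ExceptionalSem T Ds d) {y : D} (hy : y ∈ I.eval d) : k < g y := by
  by_contra! hyk
  have hmin : y ∈ minSet (heightInterp I (g · - k)).pref (I.eval .top) :=
    ⟨trivial, fun z _ hzy => by simp only [heightInterp_pref] at hzy; omega⟩
  exact hd D ⟨y⟩ _ (heightInterp_modular _ _) hM.1
    (fun p hp => heightInterp_sub_satDCI k (hM.2 p hp) (hk p hp)) hmin hy

lemma IsHeightModel.eval_eq_empty {T Ds : Set (Concept C R × Concept C R)}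
    {I : ClassInterp C R D} {g : D → ℕ} (hM : IsHeightModel T Ds I g)
    (hfix : ∀ p ∈ Ds, ExceptionalSem T Ds p.1) {c : Concept C R}
    (hc : ExceptionalSem T Ds c) : I.eval c = ∅ := by
  have hbound : ∀ k, ∀ p ∈ Ds, ∀ y ∈ I.eval p.1, k ≤ g y := by
    intro k
    induction k with
    | zero => exact fun _ _ _ _ => Nat.zero_le _
    | succ k ih => exact fun p hp y hy => hM.lt_of_exceptionalSem ih (hfix p hp) hy
  exact Set.eq_empty_of_forall_notMem fun y hy =>
    (hM.lt_of_exceptionalSem (hbound (g y)) hc hy).false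

end HeightModels

section Normalization

variable {D : Type}

lemma Modular.pref_of_mem_minSet {pref : D → D → Prop} (hm : Modular pref)
    (htrans : ∀ x y z, pref x y → pref y z → pref x z) {S : Set D} {w y : D}
    (hw : w ∈ minSet pref S) (hy : y ∈ S) (hy' : y ∉ minSet pref S) : pref w y := by
  obtain ⟨u, hu, huy⟩ : ∃ u ∈ S, pref u y := by
    by_contra! h
    exact hy' ⟨hy, h⟩
  by_contra hwy
  exact (hm y w u ⟨hw.2 y hy, hwy⟩ ⟨fun hwu => hwy (htrans _ _ _ hwu huy), hw.2 u hu⟩).2 huy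

noncomputable def normHeight (P : PrefInterp C R D) (Ds : Set (Concept C R × Concept C R))
    (y : D) : ℕ :=
  {p ∈ Ds | ∃ z ∈ minSet P.pref (P.eval p.1), P.pref z y}.ncard

lemma normHeight_le (P : PrefInterp C R D) {Ds : Set (Concept C R × Concept C R)}
    (hDs : Ds.Finite) (y : D) : normHeight P Ds y ≤ Ds.ncard :=
  Set.ncard_le_ncard (Set.sep_subset _ _) hDs

lemma normHeight_lt_of_mem_minSet (P : PrefInterp C R D)
    {Ds : Set (Concept C R × Concept C R)} (hDs : Ds.Finite) {p : Concept C R × Concept C R}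
    (hp : p ∈ Ds) {w y : D} (hw : w ∈ minSet P.pref (P.eval p.1)) (hwy : P.pref w y) :
    normHeight P Ds w < normHeight P Ds y := by
  refine Set.ncard_lt_ncard ((Set.ssubset_iff_of_subset ?_).2 ⟨p, ⟨hp, w, hw, hwy⟩, ?_⟩)
    (hDs.subset (Set.sep_subset _ _))
  · rintro q ⟨hq, z, hz, hzw⟩
    exact ⟨hq, z, hz, P.pref_trans _ _ _ hzw hwy⟩
  · rintro ⟨-, z, hz, hzw⟩
    exact hw.2 z hz.1 hzw

lemma isHeightModel_normHeight {P : PrefInterp C R D} (hm : Modular P.pref)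
    {T Ds : Set (Concept C R × Concept C R)} (hDs : Ds.Finite)
    (hT : ∀ p ∈ T, P.satGCI p.1 p.2) (hD : ∀ p ∈ Ds, P.satDCI p.1 p.2) :
    IsHeightModel T Ds P.toClassInterp (normHeight P Ds) := by
  refine ⟨hT, fun p hp y ⟨hy, hymin⟩ => ?_⟩
  by_contra hyr
  have hy' : y ∉ minSet P.pref (P.eval p.1) := fun h => hyr (hD p hp h)
  obtain ⟨w, hw⟩ := P.smooth p.1 ⟨y, hy⟩
  exact hymin w hw.1
    (normHeight_lt_of_mem_minSet P hDs hp hw (hm.pref_of_mem_minSet P.pref_trans hw hy hy'))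

lemma exists_isHeightModel_of_not_exceptionalSem {T Ds : Set (Concept C R × Concept C R)}
    (hDs : Ds.Finite) {c : Concept C R} (hc : ¬ ExceptionalSem T Ds c) :
    ∃ (D : Type) (I : ClassInterp C R D) (g : D → ℕ),
      (∀ y, g y ≤ Ds.ncard) ∧ IsHeightModel T Ds I g ∧ (I.eval c).Nonempty := by
  simp only [ExceptionalSem, modEntailsFrom, PrefInterp.satStmt, PrefInterp.satDCI,
    not_forall] at hc
  obtain ⟨D, -, P, hm, hT, hD, hc⟩ := hc
  obtain ⟨y, -, hy⟩ := Set.not_subset.1 hc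
  exact ⟨D, P.toClassInterp, normHeight P Ds, normHeight_le P hDs,
    isHeightModel_normHeight hm hDs hT hD, y, not_not.1 hy⟩

end Normalization

section Stages

variable (T : Set (Concept C R × Concept C R))

lemma eseqSem_antitone (Ds : Set (Concept C R × Concept C R)) : Antitone (EseqSem T Ds) :=
  antitone_nat_of_succ_le fun _ _ hp => hp.1

lemma eseqSem_subset (Ds : Set (Concept C R × Concept C R)) (n : ℕ) : EseqSem T Ds n ⊆ Ds :=
  eseqSem_antitone T Ds n.zero_le

lemma exists_eseqSem_fixpoint {Ds : Set (Concept C R × Concept C R)} (hDs : Ds.Finite) :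
    ∃ N, ∀ p ∈ EseqSem T Ds N, ExceptionalSem T (EseqSem T Ds N) p.1 := by
  obtain ⟨m, n, hmn, h⟩ :=
    hDs.finite_subsets.exists_lt_map_eq_of_forall_mem (eseqSem_subset T Ds)
  have hstable : EseqSem T Ds m ⊆ EseqSem T Ds (m + 1) :=
    h.le.trans (eseqSem_antitone T Ds hmn)
  exact ⟨m, fun p hp => (hstable hp).2⟩

lemma exists_lt_not_exceptionalSem_of_not_mem_eseqSem {Ds : Set (Concept C R × Concept C R)}
    {p : Concept C R × Concept C R} (hp : p ∈ Ds) {n : ℕ} (hpn : p ∉ EseqSem T Ds n) :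
    ∃ m < n, p ∈ EseqSem T Ds m ∧ ¬ ExceptionalSem T (EseqSem T Ds m) p.1 := by
  induction n with
  | zero => exact absurd hp hpn
  | succ n ih =>
    by_cases hpn' : p ∈ EseqSem T Ds n
    · exact ⟨n, n.lt_succ_self, hpn', fun h => hpn ⟨hpn', h⟩⟩
    · obtain ⟨m, hm, h⟩ := ih hpn'
      exact ⟨m, hm.trans n.lt_succ_self, h⟩

end Stages

section LayeredSum

variable {ι : Type} {Dom : ι → Type}

def sumInterp (I : ∀ i, ClassInterp C R (Dom i)) : ClassInterp C R (Σ i, Dom i) where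
  interpC a := {u | u.2 ∈ (I u.1).interpC a}
  interpR r u v := ∃ z, (I u.1).interpR r u.2 z ∧ v = ⟨u.1, z⟩

@[simp]
lemma mem_sumInterp_eval (I : ∀ i, ClassInterp C R (Dom i)) (d : Concept C R)
    (u : Σ i, Dom i) : u ∈ (sumInterp I).eval d ↔ u.2 ∈ (I u.1).eval d := by
  induction d generalizing u with
  | top | bot | atom => rfl
  | neg c ih => exact not_congr (ih u)
  | conj c d ihc ihd => exact and_congr (ihc u) (ihd u)
  | disj c d ihc ihd => exact or_congr (ihc u) (ihd u)
  | ex r c ih =>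
    constructor
    · rintro ⟨_, ⟨z, hr, rfl⟩, hz⟩
      exact ⟨z, hr, (ih _).1 hz⟩
    · rintro ⟨z, hr, hz⟩
      exact ⟨⟨u.1, z⟩, ⟨z, hr, rfl⟩, (ih _).2 hz⟩
  | all r c ih =>
    constructor
    · exact fun h z hr => (ih _).1 (h _ ⟨z, hr, rfl⟩)
    · rintro h _ ⟨z, hr, rfl⟩
      exact (ih _).2 (h z hr)

def layeredHeight (s : ι → ℕ) (B : ℕ) (g : ∀ i, Dom i → ℕ) (u : Σ i, Dom i) : ℕ :=
  s u.1 * (B + 1) + g u.1 u.2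

lemma layeredHeight_lt_of_lt {s : ι → ℕ} {B : ℕ} {g : ∀ i, Dom i → ℕ}
    (hg : ∀ i y, g i y ≤ B) {u v : Σ i, Dom i} (h : s u.1 < s v.1) :
    layeredHeight s B g u < layeredHeight s B g v := by
  have := hg u.1 u.2
  have : (s u.1 + 1) * (B + 1) ≤ s v.1 * (B + 1) := Nat.mul_le_mul_right _ h
  simp only [layeredHeight]
  nlinarith

lemma isHeightModel_sumInterp {T Ds : Set (Concept C R × Concept C R)}
    {I : ∀ i, ClassInterp C R (Dom i)} {g : ∀ i, Dom i → ℕ} {s : ι → ℕ} {B : ℕ}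
    (hg : ∀ i y, g i y ≤ B) (hT : ∀ i, ∀ p ∈ T, (I i).eval p.1 ⊆ (I i).eval p.2)
    (hD : ∀ p ∈ Ds, ∀ i, (heightInterp (I i) (g i)).satDCI p.1 p.2 ∨
      ∃ j, s j < s i ∧ ((I j).eval p.1).Nonempty) :
    IsHeightModel T Ds (sumInterp I) (layeredHeight s B g) := by
  refine ⟨fun p hp u hu => ?_, fun p hp u ⟨hu, humin⟩ => ?_⟩
  · rw [mem_sumInterp_eval] at hu ⊢
    exact hT u.1 p hp hu
  rw [heightInterp_toClassInterp, mem_sumInterp_eval] at hu ⊢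
  rcases hD p hp u.1 with hsat | ⟨j, hj, x, hx⟩
  · refine hsat ⟨hu, fun z hz hzu => humin ⟨u.1, z⟩ ((mem_sumInterp_eval ..).2 hz) ?_⟩
    simp only [heightInterp_pref, layeredHeight] at hzu ⊢
    omega
  · exact absurd (layeredHeight_lt_of_lt hg (u := ⟨j, x⟩) hj)
      (humin ⟨j, x⟩ ((mem_sumInterp_eval ..).2 hx))

end LayeredSum

lemma exists_isHeightModel_of_not_exceptionalSem_eseqSem
    {T Ds : Set (Concept C R × Concept C R)} (hDs : Ds.Finite) {n : ℕ} {c : Concept C R}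
    (hc : ¬ ExceptionalSem T (EseqSem T Ds n) c) :
    ∃ (D : Type) (I : ClassInterp C R D) (g : D → ℕ),
      IsHeightModel T Ds I g ∧ (I.eval c).Nonempty := by
  have hfin (m : ℕ) : (EseqSem T Ds m).Finite := hDs.subset (eseqSem_subset T Ds m)
  have hcard (m : ℕ) : (EseqSem T Ds m).ncard ≤ Ds.ncard :=
    Set.ncard_le_ncard (eseqSem_subset T Ds m) hDs
  obtain ⟨D₀, I₀, g₀, hg₀, hM₀, x₀, hx₀⟩ :=
    exists_isHeightModel_of_not_exceptionalSem (hfin n) hc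
  have hwit (p : ↥(Ds \ EseqSem T Ds n)) : ∃ m < n, p.1 ∈ EseqSem T Ds m ∧
      ∃ (D : Type) (I : ClassInterp C R D) (g : D → ℕ),
        (∀ y, g y ≤ (EseqSem T Ds m).ncard) ∧ IsHeightModel T (EseqSem T Ds m) I g ∧
          (I.eval p.1.1).Nonempty := by
    obtain ⟨m, hm, hpm, hexc⟩ :=
      exists_lt_not_exceptionalSem_of_not_mem_eseqSem T p.2.1 p.2.2
    exact ⟨m, hm, hpm, exists_isHeightModel_of_not_exceptionalSem (hfin m) hexc⟩
  choose m hm hpm D I g hg hM hne using hwit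
  let s : Option ↥(Ds \ EseqSem T Ds n) → ℕ := fun i => i.elim n m
  let Dom : Option ↥(Ds \ EseqSem T Ds n) → Type := fun i => i.elim D₀ D
  let I' : ∀ i, ClassInterp C R (Dom i) := fun | none => I₀ | some p => I p
  let g' : ∀ i, Dom i → ℕ := fun | none => g₀ | some p => g p
  have hM' : ∀ i, IsHeightModel T (EseqSem T Ds (s i)) (I' i) (g' i) := fun
    | none => hM₀ | some p => hM p
  have hg' : ∀ i y, g' i y ≤ Ds.ncard := fun
    | none, y => (hg₀ y).trans (hcard n) | some p, y => (hg p y).trans (hcard _)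
  have hs : ∀ i, s i ≤ n := fun | none => le_rfl | some p => (hm p).le
  refine ⟨_, sumInterp I', layeredHeight s Ds.ncard g',
    isHeightModel_sumInterp hg' (fun i => (hM' i).1) fun p hp i => ?_, ⟨none, x₀⟩,
    (mem_sumInterp_eval _ _ _).2 hx₀⟩
  by_cases hpn : p ∈ EseqSem T Ds n
  · exact .inl ((hM' i).2 p (eseqSem_antitone T Ds (hs i) hpn))
  obtain hle | hlt := le_or_gt (s i) (m ⟨p, hp, hpn⟩)
  · exact .inl ((hM' i).2 p (eseqSem_antitone T Ds hle (hpm _)))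
  · exact .inr ⟨some ⟨p, hp, hpn⟩, hlt, hne _⟩

theorem rank_infinite_iff_modEntails_bot_general {C R : Type}
    (K : KB C R) (c : Concept C R) :
    (∀ n : ℕ, ExceptionalSem K.tbox (EseqSem K.tbox K.dbox n) c) ↔
      modEntails K (Stmt.gci c Concept.bot) := by
  constructor
  · intro hc D _ P hm hP
    obtain ⟨N, hN⟩ := exists_eseqSem_fixpoint K.tbox K.dbox_finite
    have hsub := eseqSem_subset K.tbox K.dbox N
    have hM := isHeightModel_normHeight hm (K.dbox_finite.subset hsub) hP.1
      fun p hp => hP.2 p (hsub hp)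
    exact (hM.eval_eq_empty hN (hc N)).subset
  · intro hbot n
    by_contra hc
    obtain ⟨D, I, g, hM, y, hy⟩ := exists_isHeightModel_of_not_exceptionalSem_eseqSem
      K.dbox_finite hc
    exact hbot D ⟨y⟩ (heightInterp I g) (heightInterp_modular I g) hM hy

/-- `rank_K(c) = ∞` (i.e. `c` is exceptional at every stage of the
iterated exceptionality construction) iff `K` modularly entails `c ⊑ ⊥`. -/
theorem rank_infinite_iff_modEntails_bot {C R : Type} [Finite C] [Finite R]
    (K : KB C R) (c : Concept C R) :
    (∀ n : ℕ, ExceptionalSem K.tbox (EseqSem K.tbox K.dbox n) c) ↔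
      modEntails K (Stmt.gci c Concept.bot) :=
  rank_infinite_iff_modEntails_bot_general K c

end DefeasibleDL
end

section
/- For a defeasible knowledge base K = T ∪ D, if T classically entails ⊓ D̄ ⊑ ¬C (where D̄ is the materialisation of D), then the DCI C ⊏∼ D is exceptional with respect to T ∪ D, i.e. T ∪ D ⊨_mod ⊤ ⊏∼ ¬C. -/
/-!
A `≺`-minimal element of the whole domain is minimal in every concept that contains it, so in a
preferential model of `K` it satisfies every DCI of `D` classically, i.e. it lies in `⊓D̄`. Since it
also satisfies `T`, the classical entailment `T ⊨ ⊓D̄ ⊑ ¬C` puts it in `¬C`.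
-/

namespace DefeasibleDL

/-- A classical interpretation satisfies all GCIs of a TBox `T`. -/
def satisfiesTBox {C R D : Type} (I : ClassInterp C R D)
    (T : Set (Concept C R × Concept C R)) : Prop :=
  ∀ p ∈ T, I.eval p.1 ⊆ I.eval p.2

/-- The extension of the conjunction `⊓ D̄s` of the materialisation
`D̄s = {¬c ⊔ d : c ⊏∼ d ∈ Ds}` of a set of DCIs. -/
def matSet {C R D : Type} (I : ClassInterp C R D)
    (Ds : Set (Concept C R × Concept C R)) : Set D :=
  {x | ∀ p ∈ Ds, x ∈ I.eval (Concept.disj (Concept.neg p.1) p.2)}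

/-- Classical entailment `T ⊨ ⊓D̄s ⊑ ¬c`. -/
def entailsMatNeg {C R : Type} (T Ds : Set (Concept C R × Concept C R))
    (c : Concept C R) : Prop :=
  ∀ (D : Type) (_ : Nonempty D) (I : ClassInterp C R D),
    satisfiesTBox I T → matSet I Ds ⊆ (I.eval c)ᶜ

theorem minSet_inter_subset {D : Type} {pref : D → D → Prop} {S T : Set D} (hST : S ⊆ T) :
    minSet pref T ∩ S ⊆ minSet pref S :=
  fun _ hx => ⟨hx.2, fun y hy => hx.1.2 y (hST hy)⟩

theorem PrefInterp.minSet_top_subset_matSet {C R D : Type} (P : PrefInterp C R D)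
    {Ds : Set (Concept C R × Concept C R)} (hDs : ∀ p ∈ Ds, P.satDCI p.1 p.2) :
    minSet P.pref (P.toClassInterp.eval .top) ⊆ matSet P.toClassInterp Ds := by
  intro x hx p hp
  by_cases hxp : x ∈ P.toClassInterp.eval p.1
  · exact Or.inr (hDs p hp (minSet_inter_subset (Set.subset_univ _) ⟨hx, hxp⟩))
  · exact Or.inl hxp

theorem modEntails_of_prefEntails {C R : Type} {K : KB C R} {s : Stmt C R}
    (h : prefEntails K s) : modEntails K s :=
  fun D hD P _ => h D hD P

theorem prefEntails_top_neg_of_entailsMatNeg {C R : Type} {K : KB C R} {c : Concept C R}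
    (h : entailsMatNeg K.tbox K.dbox c) :
    prefEntails K (Stmt.dci Concept.top (Concept.neg c)) :=
  fun D hD P hP => (P.minSet_top_subset_matSet hP.2).trans (h D hD P.toClassInterp hP.1)

theorem materialisation_exceptional_general {C R : Type}
    (K : KB C R) (c : Concept C R)
    (h : entailsMatNeg K.tbox K.dbox c) :
    modEntails K (Stmt.dci Concept.top (Concept.neg c)) :=
  modEntails_of_prefEntails (prefEntails_top_neg_of_entailsMatNeg h)

/-- if `T` classically entails `⊓D̄ ⊑ ¬c` (with `D̄` the
materialisation of the DTBox `D`), then the DCI `c ⊏∼ d` is exceptional with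
respect to `K = T ∪ D`, i.e. `K ⊨_mod ⊤ ⊏∼ ¬c`. -/
theorem materialisation_exceptional {C R : Type} [Finite C] [Finite R]
    (K : KB C R) (c d : Concept C R)
    (h : entailsMatNeg K.tbox K.dbox c) :
    modEntails K (Stmt.dci Concept.top (Concept.neg c)) :=
  materialisation_exceptional_general K c h

end DefeasibleDL
end
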